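/- arXiv:1103.1812 — 4 statements merged into one kernel-verified Lean document; each statement's English description precedes it below -/
import Mathlib

section
/- If L is a finite dimensional nilpotent Lie algebra of dimension greater than 1 over a field, then its Schur multiplier M(L) is nonzero. -/
open LieModule Finset

/-- Witt's dimension function `l_n(d) = (1/d) ∑_{m ∣ d} μ(m) n^{d/m}`. -/
noncomputable def lWitt (n d : ℕ) : ℚ :=
  (1 / d) * ∑ m ∈ d.divisors, (ArithmeticFunction.moebius m : ℚ) * (n : ℚ) ^ (d / m)

/-- The quotient `A/B` of two Lie ideals, regarded as a module. -/
abbrev lieIdealQuot (K : Type*) {L : Type*} [Field K] [LieRing L] [LieAlgebra K L]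
    (A B : LieIdeal K L) : Type _ :=
  A.toSubmodule ⧸ (B.toSubmodule.comap A.toSubmodule.subtype)

/-- The Schur multiplier `M(L) = (F² ⊓ R)/[F,R]` computed from a free presentation
`L ≅ F/R`, where `R` is the kernel of the presentation. -/
abbrev schurMult (K : Type*) {F : Type*} [Field K] [LieRing F] [LieAlgebra K F]
    (R : LieIdeal K F) : Type _ :=
  lieIdealQuot K (lowerCentralSeries K F F 1 ⊓ R) ⁅(⊤ : LieIdeal K F), R⁆

/-!
A trivial Schur multiplier forces every `2`-cocycle of `L` with trivial coefficients to be a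
coboundary: lift the presentation `π : F → L` to the central extension defined by the cocycle.
The lift kills `[F, R]`, hence `F² ∩ R`, so its central component on `F²` factors through
`π : F² → L²` and provides the `1`-cochain.

For `L` nilpotent of dimension at least `2` a non-trivial cocycle is `f ∧ g`, where `f` vanishes
on `L²` with `f x = 1` and `I = ker f`. The cocycle condition only asks `g` to vanish on `[I, I]`,
while `f ∧ g = k ∘ ⁅·, ·⁆` would give `g|_I = k ∘ ad x` with `k` vanishing on `[I, I]`. Since
`[I, I] ≠ I` and `ad x` is nilpotent on `I`, the transpose of `ad x` cannot map the annihilator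
of `[I, I]` onto itself, so some `g` escapes.
-/

open LieAlgebra LieModule.Cohomology

section CommRing

variable {R V : Type*} [CommRing R] [AddCommGroup V] [Module R V]

lemma Submodule.eq_bot_of_le_map_of_isNilpotent {T : Module.End R V} (hT : IsNilpotent T)
    {U : Submodule R V} (hU : U ≤ U.map T) : U = ⊥ := by
  obtain ⟨n, hn⟩ := hT
  have hUk : ∀ k, U ≤ U.map (T ^ k) := by
    intro k
    induction k with
    | zero => rw [pow_zero, Module.End.one_eq_id, Submodule.map_id]
    | succ k ih =>
      calc U ≤ U.map (T ^ k) := ih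
        _ ≤ (U.map T).map (T ^ k) := Submodule.map_mono hU
        _ = U.map (T ^ (k + 1)) := by
          rw [← Submodule.map_comp, ← Module.End.mul_eq_comp, pow_succ]
  simpa [hn] using hUk n

lemma Module.End.isNilpotent_dualMap {A : Module.End R V} (hA : IsNilpotent A) :
    IsNilpotent A.dualMap := by
  obtain ⟨n, hn⟩ := hA
  have hpow : ∀ k : ℕ, (A ^ k).dualMap = A.dualMap ^ k := by
    intro k
    induction k with
    | zero => exact LinearMap.dualMap_id
    | succ k ih =>
      rw [pow_succ, Module.End.mul_eq_comp, ← LinearMap.dualMap_comp_dualMap, ih, pow_succ']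
      rfl
  exact ⟨n, by rw [← hpow, hn]; ext; simp⟩

end CommRing

section Field

variable {K V W U : Type*} [Field K] [AddCommGroup V] [Module K V] [AddCommGroup W] [Module K W]
  [AddCommGroup U] [Module K U]

theorem LinearMap.exists_comp_eq_of_ker_le (p : V →ₗ[K] W) (q : V →ₗ[K] U)
    (hpq : ker p ≤ ker q) : ∃ h : W →ₗ[K] U, h ∘ₗ p = q := by
  obtain ⟨r, hr⟩ := ((ker p).liftQ p le_rfl).exists_leftInverse_of_injective
    ((ker p).ker_liftQ_eq_bot p le_rfl le_rfl)
  refine ⟨(ker p).liftQ q hpq ∘ₗ r, LinearMap.ext fun v => ?_⟩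
  have hrp : r (p v) = (ker p).mkQ v := by simpa using LinearMap.congr_fun hr ((ker p).mkQ v)
  simp [hrp]

lemma Submodule.exists_mem_dualAnnihilator_apply_eq_one {W : Submodule K V} {x : V}
    (hx : x ∉ W) : ∃ f ∈ W.dualAnnihilator, f x = 1 := by
  obtain ⟨f, hfx, hfW⟩ := W.exists_dual_map_eq_bot_of_notMem hx inferInstance
  refine ⟨(f x)⁻¹ • f, (mem_dualAnnihilator _).2 fun w hw => ?_, by simp [hfx]⟩
  have : f w ∈ W.map f := mem_map_of_mem hw
  simp_all

lemma Submodule.exists_mem_dualAnnihilator_notMem_map_dualMap {A : Module.End K V}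
    (hA : IsNilpotent A) {W : Submodule K V} (hW : W ≠ ⊤) :
    ∃ φ ∈ W.dualAnnihilator, φ ∉ W.dualAnnihilator.map A.dualMap := by
  by_contra! h
  exact hW <| dualAnnihilator_eq_bot_iff.mp <|
    eq_bot_of_le_map_of_isNilpotent (Module.End.isNilpotent_dualMap hA) h

end Field

section LieRing

variable {R L : Type*} [CommRing R] [LieRing L] [LieAlgebra R L]

lemma LieModule.lie_mem_lowerCentralSeries_one {M : Type*} [AddCommGroup M] [Module R M]
    [LieRingModule L M] [LieModule R L M] (x : L) (m : M) :
    ⁅x, m⁆ ∈ lowerCentralSeries R L M 1 := by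
  rw [lowerCentralSeries_succ, lowerCentralSeries_zero]
  exact LieSubmodule.lie_mem_lie (LieSubmodule.mem_top x) (LieSubmodule.mem_top m)

lemma LieAlgebra.mem_dualAnnihilator_derivedSeries_one_iff {f : Module.Dual R L} :
    f ∈ (derivedSeries R L 1).toSubmodule.dualAnnihilator ↔ ∀ a b : L, f ⁅a, b⁆ = 0 := by
  rw [derivedSeries_def, derivedSeriesOfIdeal_succ, derivedSeriesOfIdeal_zero,
    LieSubmodule.lieIdeal_oper_eq_linear_span, Submodule.mem_dualAnnihilator]
  constructor
  · exact fun h a b => h _ (Submodule.subset_span ⟨⟨a, trivial⟩, ⟨b, trivial⟩, rfl⟩)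
  · intro h w hw
    induction hw using Submodule.span_induction with
    | mem w hw => obtain ⟨a, b, rfl⟩ := hw; exact h a b
    | zero => simp
    | add _ _ _ _ h₁ h₂ => simp [h₁, h₂]
    | smul _ _ _ h₁ => simp [h₁]

end LieRing

lemma subsingleton_lieIdealQuot_iff {K L : Type*} [Field K] [LieRing L] [LieAlgebra K L]
    {A B : LieIdeal K L} : Subsingleton (lieIdealQuot K A B) ↔ A ≤ B := by
  rw [Submodule.Quotient.subsingleton_iff, Submodule.comap_subtype_eq_top,
    LieSubmodule.toSubmodule_le_toSubmodule]

namespace LieAlgebra.ofTwoCocycle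

variable {K L M : Type*} [CommRing K] [LieRing L] [LieAlgebra K L] [AddCommGroup M] [Module K M]
  [LieRingModule L M] [LieModule K L M] (c : twoCocycle K L M)

def proj : ofTwoCocycle c →ₗ⁅K⁆ L where
  toFun x := ((ofProd c).symm x).1
  map_add' _ _ := rfl
  map_smul' _ _ := rfl
  map_lie' := rfl

@[simp] lemma proj_apply (x : ofTwoCocycle c) : proj c x = ((ofProd c).symm x).1 := rfl

def fiber : ofTwoCocycle c →ₗ[K] M where
  toFun x := ((ofProd c).symm x).2
  map_add' _ _ := rfl
  map_smul' _ _ := rfl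

@[simp] lemma fiber_apply (x : ofTwoCocycle c) : fiber c x = ((ofProd c).symm x).2 := rfl

variable [LieModule.IsTrivial L M]

lemma fiber_lie (x y : ofTwoCocycle c) :
    fiber c ⁅x, y⁆ = (c : L →ₗ[K] L →ₗ[K] M) (proj c x) (proj c y) := by
  simp [bracket_ofTwoCocycle, trivial_lie_zero]

lemma lie_eq_zero_of_proj_eq_zero (x : ofTwoCocycle c) {y : ofTwoCocycle c}
    (hy : proj c y = 0) : ⁅x, y⁆ = 0 := by
  rw [proj_apply] at hy
  simp [bracket_ofTwoCocycle, trivial_lie_zero, hy, ← of_zero]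

end LieAlgebra.ofTwoCocycle

theorem mem_range_d₁₂_of_subsingleton_schurMult {K L M X : Type*} [Field K] [LieRing L]
    [LieAlgebra K L] [AddCommGroup M] [Module K M] [LieRingModule L M] [LieModule K L M]
    [LieModule.IsTrivial L M] (π : FreeLieAlgebra K X →ₗ⁅K⁆ L) (hπ : Function.Surjective π)
    (hM : Subsingleton (schurMult K π.ker)) (c : twoCocycle K L M) :
    c.1 ∈ LinearMap.range (d₁₂ K L M) := by
  rw [subsingleton_lieIdealQuot_iff] at hM
  let σ : FreeLieAlgebra K X →ₗ⁅K⁆ ofTwoCocycle c :=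
    FreeLieAlgebra.lift K fun y => ofProd c (π (.of K y), 0)
  have hσ : ∀ u, ofTwoCocycle.proj c (σ u) = π u := LieHom.congr_fun <|
    FreeLieAlgebra.hom_ext (F₁ := (ofTwoCocycle.proj c).comp σ) fun y => by simp [σ]
  have hσR : ⁅(⊤ : LieIdeal K (FreeLieAlgebra K X)), π.ker⁆ ≤ σ.ker := by
    rw [LieSubmodule.lie_le_iff]
    intro u _ r hr
    rw [LieHom.mem_ker, LieHom.map_lie]
    exact ofTwoCocycle.lie_eq_zero_of_proj_eq_zero c _ (by rwa [hσ])
  let D := (lowerCentralSeries K (FreeLieAlgebra K X) (FreeLieAlgebra K X) 1).toSubmodule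
  obtain ⟨h, hh⟩ := LinearMap.exists_comp_eq_of_ker_le (π.toLinearMap ∘ₗ D.subtype)
    (ofTwoCocycle.fiber c ∘ₗ σ.toLinearMap ∘ₗ D.subtype) <| by
      rintro ⟨w, hw⟩ hπw
      have hσw : σ w = 0 := hσR (hM ⟨hw, hπw⟩)
      simp [hσw]
  refine ⟨-h, Subtype.ext <| LinearMap.ext₂ fun a b => ?_⟩
  obtain ⟨u, rfl⟩ := hπ a
  obtain ⟨v, rfl⟩ := hπ b
  have hfib : h (π ⁅u, v⁆) = ofTwoCocycle.fiber c (σ ⁅u, v⁆) :=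
    LinearMap.congr_fun hh ⟨⁅u, v⁆, lie_mem_lowerCentralSeries_one u v⟩
  calc d₁₂ K L M (-h) (π u) (π v)
      = h ⁅π u, π v⁆ := by rw [d₁₂_apply_apply_ofTrivial, LinearMap.neg_apply, neg_neg]
    _ = ofTwoCocycle.fiber c ⁅σ u, σ v⁆ := by rw [← LieHom.map_lie, hfib, LieHom.map_lie]
    _ = (c : L →ₗ[K] L →ₗ[K] M) (π u) (π v) := by rw [ofTwoCocycle.fiber_lie, hσ, hσ]

section Wedge

variable {K L : Type*} [CommRing K] [LieRing L] [LieAlgebra K L]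

def wedgeTwoCochain (f g : Module.Dual K L) : twoCochain K L (TrivialLieModule K L K) where
  val := (f.smulRight g - g.smulRight f).compr₂ (TrivialLieModule.equiv K L K).symm.toLinearMap
  property a := by simp [mul_comm]

lemma equiv_wedgeTwoCochain_apply (f g : Module.Dual K L) (a b : L) :
    TrivialLieModule.equiv K L K (wedgeTwoCochain f g a b) = f a * g b - g a * f b :=
  rfl

lemma apply_lie_eq_of_apply_eq_one {f g : Module.Dual K L} {x : L} (hfx : f x = 1)
    (hg : ∀ a b, f a = 0 → f b = 0 → g ⁅a, b⁆ = 0) (b c : L) :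
    g ⁅b, c⁆ = f b * g ⁅x, c⁆ - f c * g ⁅x, b⁆ := by
  have hb : f (b - f b • x) = 0 := by simp [hfx]
  have hc : f (c - f c • x) = 0 := by simp [hfx]
  have hbc : ⁅b, c⁆ = ⁅b - f b • x, c - f c • x⁆ + f b • ⁅x, c⁆ - f c • ⁅x, b⁆ := by
    simp only [lie_sub, sub_lie, lie_smul, smul_lie, lie_self, smul_zero, ← lie_skew b x]
    module
  rw [hbc, map_sub, map_add, map_smul, map_smul, hg _ _ hb hc, smul_eq_mul, smul_eq_mul, zero_add]

lemma wedgeTwoCochain_mem_twoCocycle {f g : Module.Dual K L} {x : L}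
    (hf : ∀ a b : L, f ⁅a, b⁆ = 0) (hfx : f x = 1)
    (hg : ∀ a b, f a = 0 → f b = 0 → g ⁅a, b⁆ = 0) :
    wedgeTwoCochain f g ∈ twoCocycle K L (TrivialLieModule K L K) := by
  rw [mem_twoCocycle_iff_of_trivial]
  intro a b c
  apply (TrivialLieModule.equiv K L K).injective
  simp only [map_add, equiv_wedgeTwoCochain_apply, hf]
  rw [apply_lie_eq_of_apply_eq_one hfx hg b c, apply_lie_eq_of_apply_eq_one hfx hg a b,
    apply_lie_eq_of_apply_eq_one hfx hg a c]
  ring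

end Wedge

section Nilpotent

variable {K L : Type*} [Field K] [LieRing L] [LieAlgebra K L] [LieRing.IsNilpotent L]

lemma LieAlgebra.exists_dual_lie_eq_zero_apply_eq_one [Nontrivial L] :
    ∃ (f : Module.Dual K L) (x : L), (∀ a b : L, f ⁅a, b⁆ = 0) ∧ f x = 1 := by
  obtain ⟨x, -, hx⟩ := SetLike.exists_of_lt (derivedSeries_lt_top_of_solvable K L)
  obtain ⟨f, hf, hfx⟩ := Submodule.exists_mem_dualAnnihilator_apply_eq_one
    (show x ∉ (derivedSeries K L 1).toSubmodule from hx)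
  exact ⟨f, x, mem_dualAnnihilator_derivedSeries_one_iff.1 hf, hfx⟩

lemma LieIdeal.exists_dual_notMem_dualMap_ad (I : LieIdeal K L) [Nontrivial I] (x : L) :
    ∃ g : Module.Dual K L, (∀ a ∈ I, ∀ b ∈ I, g ⁅a, b⁆ = 0) ∧
      ∀ k : Module.Dual K L, (∀ a ∈ I, ∀ b ∈ I, k ⁅a, b⁆ = 0) → ∃ m ∈ I, g m ≠ k ⁅x, m⁆ := by
  have : LieModule.IsNilpotent L I := by
    have : LieModule.IsNilpotent L (⊤ : LieIdeal K L) := isNilpotent_of_top_iff'.2 inferInstance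
    exact isNilpotent_of_le K L L I ⊤ le_top
  have hW : (derivedSeries K I 1).toSubmodule ≠ ⊤ := by
    simpa using (derivedSeries_lt_top_of_solvable K I).ne
  obtain ⟨φ, hφ, hφA⟩ := Submodule.exists_mem_dualAnnihilator_notMem_map_dualMap
    (isNilpotent_toEnd_of_isNilpotent K L I x) hW
  obtain ⟨g, hg⟩ := LinearMap.exists_extend (p := I.toSubmodule) φ
  have hgφ : ∀ m : I, g m = φ m := fun m => LinearMap.congr_fun hg m
  rw [mem_dualAnnihilator_derivedSeries_one_iff] at hφ
  refine ⟨g, fun a ha b hb => by simpa [← hgφ] using hφ ⟨a, ha⟩ ⟨b, hb⟩, fun k hk => ?_⟩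
  by_contra! hkg
  refine hφA ⟨k ∘ₗ I.toSubmodule.subtype,
    mem_dualAnnihilator_derivedSeries_one_iff.2 fun a b => hk a a.2 b b.2, ?_⟩
  ext m
  exact (hkg m m.2).symm.trans (hgφ m)

theorem LieAlgebra.exists_twoCocycle_notMem_range_d₁₂ (hdim : 1 < Module.finrank K L) :
    ∃ c : twoCocycle K L (TrivialLieModule K L K),
      c.1 ∉ LinearMap.range (d₁₂ K L (TrivialLieModule K L K)) := by
  have : Nontrivial L := Module.nontrivial_of_finrank_pos (R := K) (by omega)
  obtain ⟨f, x, hf, hfx⟩ := exists_dual_lie_eq_zero_apply_eq_one (K := K) (L := L)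
  let I : LieIdeal K L := { LinearMap.ker f with lie_mem := fun _ => hf _ _ }
  have : Nontrivial I := by
    rw [LieSubmodule.nontrivial_iff_ne_bot]
    intro hI
    have hinj : Function.Injective f :=
      LinearMap.ker_eq_bot.1 (congrArg LieSubmodule.toSubmodule hI)
    have := LinearMap.finrank_le_finrank_of_injective hinj
    rw [Module.finrank_self] at this
    omega
  obtain ⟨g, hg, hesc⟩ := I.exists_dual_notMem_dualMap_ad x
  refine ⟨⟨wedgeTwoCochain f g,
    wedgeTwoCochain_mem_twoCocycle hf hfx fun a b ha hb => hg a ha b hb⟩, ?_⟩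
  rintro ⟨h, hh : d₁₂ K L _ h = wedgeTwoCochain f g⟩
  let k : Module.Dual K L := -((TrivialLieModule.equiv K L K).toLinearMap ∘ₗ h)
  have hk : ∀ a b, f a * g b - g a * f b = k ⁅a, b⁆ := fun a b => by
    rw [← equiv_wedgeTwoCochain_apply, ← hh, d₁₂_apply_apply_ofTrivial]
    simp [k]
  obtain ⟨m, hm, hne⟩ := hesc k fun a ha b hb => by
    rw [← hk, show f a = 0 from ha, show f b = 0 from hb]; ring
  exact hne (by rw [← hk, hfx, show f m = 0 from hm]; ring)

end Nilpotent

theorem stmt4_general (K : Type) [Field K] (L : Type) [LieRing L] [LieAlgebra K L]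
    [LieRing.IsNilpotent L]
    (hdim : 1 < Module.finrank K L)
    (X : Type) (π : FreeLieAlgebra K X →ₗ⁅K⁆ L) (hπ : Function.Surjective π) :
    Nontrivial (schurMult K π.ker) := by
  obtain ⟨c, hc⟩ := exists_twoCocycle_notMem_range_d₁₂ hdim
  rw [← not_subsingleton_iff_nontrivial]
  exact fun hM => hc (mem_range_d₁₂_of_subsingleton_schurMult π hπ hM c)

theorem stmt4 (K : Type) [Field K] (L : Type) [LieRing L] [LieAlgebra K L]
    [FiniteDimensional K L] [LieRing.IsNilpotent L]
    (hdim : 1 < Module.finrank K L)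
    (X : Type) (π : FreeLieAlgebra K X →ₗ⁅K⁆ L) (hπ : Function.Surjective π) :
    Nontrivial (schurMult K π.ker) :=
  stmt4_general K L hdim X π hπ
end

section
/- If L is a finite dimensional Lie algebra of dimension n, then dim M(L) ≤ n(n-1)/2. -/
open LieModule Finset

/-! Fix a linear section `s` of `π : F → L` and put `R = ker π`. Modulo `[F, R]` the ideal `R` is
central, so `⁅u, v⁆ mod [F, R]` depends only on `π u` and `π v`: it is the alternating bilinear map
`(x, y) ↦ ⁅s x, s y⁆ mod [F, R]` evaluated there. Hence the image of `F²` in `F / [F, R]` is the image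
of a linear map on `⋀² L`, so has dimension at most `n(n-1)/2`, and `M(L) = (F² ⊓ R) / [F, R]` embeds in it. -/

def LinearMap.toAlternatingMapFinTwo {R M N : Type*} [CommRing R] [AddCommGroup M] [Module R M]
    [AddCommGroup N] [Module R N] (β : M →ₗ[R] M →ₗ[R] N) (hβ : β.IsAlt) :
    M [⋀^Fin 2]→ₗ[R] N where
  toFun v := β (v 0) (v 1)
  map_update_add' v i x y := by fin_cases i <;> simp
  map_update_smul' v i c x := by fin_cases i <;> simp
  map_eq_zero_of_eq' v i j hv hij := by
    fin_cases i <;> fin_cases j <;> simp_all [hβ.self_eq_zero]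

theorem LinearMap.IsAlt.finrank_le_choose_two_of_le_span {K M N : Type*} [Field K]
    [AddCommGroup M] [Module K M] [FiniteDimensional K M] [AddCommGroup N] [Module K N]
    {β : M →ₗ[K] M →ₗ[K] N} (hβ : β.IsAlt) {S : Submodule K N}
    (hS : S ≤ Submodule.span K {z | ∃ x y, β x y = z}) :
    Module.finrank K S ≤ (Module.finrank K M).choose 2 := by
  set f := exteriorPower.alternatingMapLinearEquiv (β.toAlternatingMapFinTwo hβ)
  have hspan : Submodule.span K {z | ∃ x y, β x y = z} ≤ LinearMap.range f := by
    rw [Submodule.span_le]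
    rintro _ ⟨x, y, rfl⟩
    exact ⟨exteriorPower.ιMulti K 2 ![x, y], by
      simp [f, exteriorPower.alternatingMapLinearEquiv_apply_ιMulti,
        LinearMap.toAlternatingMapFinTwo]⟩
  calc Module.finrank K S ≤ Module.finrank K (LinearMap.range f) :=
        Submodule.finrank_mono (hS.trans hspan)
    _ ≤ Module.finrank K (⋀[K]^2 M) := LinearMap.finrank_range_le f
    _ = (Module.finrank K M).choose 2 := exteriorPower.finrank_eq K 2

theorem Submodule.finrank_quotient_comap_subtype {K M : Type*} [Ring K] [AddCommGroup M]
    [Module K M] (A B : Submodule K M) :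
    Module.finrank K (A ⧸ B.comap A.subtype) = Module.finrank K (A.map B.mkQ) := by
  have hker : LinearMap.ker (B.mkQ ∘ₗ A.subtype) = B.comap A.subtype := by
    rw [LinearMap.ker_comp, Submodule.ker_mkQ]
  rw [← hker, (LinearMap.quotKerEquivRange _).finrank_eq, LinearMap.range_comp,
    Submodule.range_subtype]

namespace LieIdeal

variable {K F : Type*} [CommRing K] [LieRing F] [LieAlgebra K F]

theorem lie_sub_lie_mem_lie_top (I : LieIdeal K F) {u u' v v' : F} (hu : u - u' ∈ I)
    (hv : v - v' ∈ I) : ⁅u, v⁆ - ⁅u', v'⁆ ∈ ⁅(⊤ : LieIdeal K F), I⁆ := by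
  have hsplit : ⁅u, v⁆ - ⁅u', v'⁆ = -⁅v, u - u'⁆ + ⁅u', v - v'⁆ := by
    rw [lie_skew, sub_lie, lie_sub]
    abel
  rw [hsplit]
  exact add_mem (neg_mem (LieSubmodule.lie_mem_lie (LieSubmodule.mem_top v) hu))
    (LieSubmodule.lie_mem_lie (LieSubmodule.mem_top u') hv)

end LieIdeal

section Presentation

variable {K F L : Type*} [CommRing K] [LieRing F] [LieAlgebra K F] [LieRing L] [LieAlgebra K L]
  (π : F →ₗ⁅K⁆ L) (s : L →ₗ[K] F)

def liftedBracket : L →ₗ[K] L →ₗ[K] F ⧸ (⁅(⊤ : LieIdeal K F), π.ker⁆ : LieIdeal K F).toSubmodule :=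
  LinearMap.mk₂ K (fun x y => Submodule.mkQ _ ⁅s x, s y⁆)
    (fun x x' y => by simp [add_lie]) (fun c x y => by simp [smul_lie])
    (fun x y y' => by simp [lie_add]) (fun c x y => by simp [lie_smul])

theorem liftedBracket_isAlt : (liftedBracket π s).IsAlt := fun x => by simp [liftedBracket]

variable {π s}

theorem mkQ_lie_eq_liftedBracket (hs : ∀ x, π (s x) = x) (u v : F) :
    Submodule.mkQ _ ⁅u, v⁆ = liftedBracket π s (π u) (π v) := by
  have hlift : ∀ w, w - s (π w) ∈ π.ker := fun w => by
    rw [LieHom.mem_ker, map_sub, hs, sub_self]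
  show _ = Submodule.mkQ _ ⁅s (π u), s (π v)⁆
  rw [Submodule.mkQ_apply, Submodule.mkQ_apply, Submodule.Quotient.eq]
  exact π.ker.lie_sub_lie_mem_lie_top (hlift u) (hlift v)

theorem map_derived_le_span_liftedBracket (hs : ∀ x, π (s x) = x) :
    (lowerCentralSeries K F F 1).toSubmodule.map (Submodule.mkQ _) ≤
      Submodule.span K {z | ∃ x y, liftedBracket π s x y = z} := by
  rw [lowerCentralSeries_succ, lowerCentralSeries_zero,
    LieSubmodule.lieIdeal_oper_eq_linear_span (⊤ : LieSubmodule K F F), Submodule.map_span_le]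
  rintro _ ⟨⟨u, -⟩, ⟨v, -⟩, rfl⟩
  exact Submodule.subset_span ⟨π u, π v, (mkQ_lie_eq_liftedBracket hs u v).symm⟩

end Presentation

theorem stmt7 (K : Type) [Field K] (L : Type) [LieRing L] [LieAlgebra K L]
    [FiniteDimensional K L] (n : ℕ) (hn : Module.finrank K L = n)
    (X : Type) (π : FreeLieAlgebra K X →ₗ⁅K⁆ L) (hπ : Function.Surjective π) :
    (Module.finrank K (schurMult K π.ker) : ℚ) ≤ (n : ℚ) * ((n : ℚ) - 1) / 2 := by
  obtain ⟨s, hs⟩ := π.toLinearMap.exists_rightInverse_of_surjective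
    (LinearMap.range_eq_top.mpr hπ)
  rw [← hn, ← Nat.cast_choose_two, Nat.cast_le]
  calc Module.finrank K (schurMult K π.ker)
      = Module.finrank K ((lowerCentralSeries K _ _ 1 ⊓ π.ker).toSubmodule.map
          (Submodule.mkQ _)) := Submodule.finrank_quotient_comap_subtype _ _
    _ ≤ (Module.finrank K L).choose 2 :=
      (liftedBracket_isAlt π s).finrank_le_choose_two_of_le_span <|
        (Submodule.map_mono inf_le_left).trans <|
          map_derived_le_span_liftedBracket fun x => LinearMap.congr_fun hs x
end

section
/- Let L be a nilpotent Lie algebra of class c ≥ 2 with free presentation L ≅ F/R where F is a free Lie algebra. Then [F, F^c] = F^{c+1} ⊆ R, and there is an exact sequence 0 → F^{c+1}/([F,R] ∩ F^{c+1}) → M(L) → M(L/L^c) → L^c → 0. -/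
/-!
Put `R = ker π` and `P = F^c` (Mathlib's `lowerCentralSeries K F F k` is `F^{k+1}`). The
hypothesis `L^{c+1} = 0` gives `[F, P] = F^{c+1} ⊆ R`, and `F/(P + R)` presents `L/L^c`, so
`M(L/L^c) = (F² ∩ (P + R))/[F, P + R]`. All four maps are induced by inclusions of subquotients
of `F` or by `π`, and exactness reduces to the single identity `[F, P + R] = [F, P] + [F, R]`.
-/

open LieModule Finset

namespace Submodule

variable {R V W M : Type*} [Ring R] [AddCommGroup V] [Module R V] [AddCommGroup W] [Module R W]
  [AddCommGroup M] [Module R M]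

section subquotientMap

variable {A₁ A₂ B₁ B₂ : Submodule R V} (hA : A₁ ≤ A₂) (hB : B₁ ≤ B₂)

def subquotientMap : (A₁ ⧸ B₁.comap A₁.subtype) →ₗ[R] A₂ ⧸ B₂.comap A₂.subtype :=
  mapQ _ _ (inclusion hA) fun _ hx ↦ hB hx

lemma subquotientMap_mk_eq_zero_iff (x : A₁) :
    subquotientMap hA hB (Quotient.mk x) = 0 ↔ (x : V) ∈ B₂ :=
  Quotient.mk_eq_zero _

lemma subquotientMap_injective (h : A₁ ⊓ B₂ ≤ B₁) :
    Function.Injective (subquotientMap hA hB) := by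
  refine (injective_iff_map_eq_zero _).mpr fun y hy ↦ ?_
  obtain ⟨x, rfl⟩ := Quotient.mk_surjective _ y
  exact (Quotient.mk_eq_zero _).mpr (h ⟨x.2, (subquotientMap_mk_eq_zero_iff hA hB x).mp hy⟩)

lemma exact_subquotientMap {g : (A₂ ⧸ B₂.comap A₂.subtype) →ₗ[R] M}
    (hg : ∀ x : A₂, g (Quotient.mk x) = 0 ↔ (x : V) ∈ A₁ ⊔ B₂) :
    Function.Exact (subquotientMap hA hB) g := by
  intro y
  obtain ⟨x, rfl⟩ := Quotient.mk_surjective _ y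
  rw [hg]
  constructor
  · intro hx
    obtain ⟨a, ha, b, hb, hab⟩ := mem_sup.mp hx
    refine ⟨Quotient.mk ⟨a, ha⟩, (Quotient.eq _).mpr ?_⟩
    have hax : a - x = -b := by rw [← hab]; abel
    show a - x ∈ B₂
    exact hax ▸ B₂.neg_mem hb
  · rintro ⟨z, hz⟩
    obtain ⟨w, rfl⟩ := Quotient.mk_surjective _ z
    have hwx : (w : V) - x ∈ B₂ := (Quotient.eq (B₂.comap A₂.subtype)).mp hz
    simpa using add_mem_sup w.2 (B₂.neg_mem hwx)

end subquotientMap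

section subquotientLift

variable {A B : Submodule R V} (T : Submodule R W) (φ : V →ₗ[R] W) (hT : A ≤ T.comap φ)
  (hB : B ≤ LinearMap.ker φ)

def subquotientLift : (A ⧸ B.comap A.subtype) →ₗ[R] T :=
  liftQ _ (LinearMap.codRestrict T (φ ∘ₗ A.subtype) fun x ↦ hT x.2) fun _ hx ↦
    Subtype.ext (hB hx)

@[simp]
lemma subquotientLift_mk (x : A) : (subquotientLift T φ hT hB (Quotient.mk x) : W) = φ x :=
  rfl

lemma subquotientLift_mk_eq_zero_iff (x : A) :
    subquotientLift T φ hT hB (Quotient.mk x) = 0 ↔ φ x = 0 := by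
  rw [← subquotientLift_mk T φ hT hB, ZeroMemClass.coe_eq_zero]

lemma subquotientLift_surjective (h : T ≤ A.map φ) :
    Function.Surjective (subquotientLift T φ hT hB) := by
  rintro ⟨t, ht⟩
  obtain ⟨x, hx, rfl⟩ := h ht
  exact ⟨Quotient.mk ⟨x, hx⟩, rfl⟩

end subquotientLift

end Submodule

open Submodule

lemma LieSubmodule.top_lie_le_lowerCentralSeries_one {K L M : Type*} [CommRing K] [LieRing L]
    [LieAlgebra K L] [AddCommGroup M] [Module K M] [LieRingModule L M]
    (N : LieSubmodule K L M) : ⁅(⊤ : LieIdeal K L), N⁆ ≤ lowerCentralSeries K L M 1 :=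
  LieSubmodule.mono_lie le_rfl le_top

lemma LieHom.lowerCentralSeries_le_ker {K F L : Type*} [CommRing K] [LieRing F]
    [LieAlgebra K F] [LieRing L] [LieAlgebra K L] {π : F →ₗ⁅K⁆ L} (hπ : Function.Surjective π)
    {k : ℕ} (hk : lowerCentralSeries K L L k = ⊥) : lowerCentralSeries K F F k ≤ π.ker := by
  rw [← LieIdeal.map_eq_bot_iff, LieIdeal.lowerCentralSeries_map_eq k hπ, hk]

theorem exists_exact_schurMult_of_top_lie_le_ker {K F L : Type*} [Field K] [LieRing F]
    [LieAlgebra K F] [LieRing L] [LieAlgebra K L] {π : F →ₗ⁅K⁆ L}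
    (hπ : Function.Surjective π) {P : LieIdeal K F} (hP : P ≤ lowerCentralSeries K F F 1)
    (hPR : ⁅(⊤ : LieIdeal K F), P⁆ ≤ π.ker) :
    ∃ (f : lieIdealQuot K ⁅(⊤ : LieIdeal K F), P⁆
          (⁅(⊤ : LieIdeal K F), π.ker⁆ ⊓ ⁅(⊤ : LieIdeal K F), P⁆) →ₗ[K] schurMult K π.ker)
      (g : schurMult K π.ker →ₗ[K] schurMult K (P ⊔ π.ker))
      (h : schurMult K (P ⊔ π.ker) →ₗ[K] (P.map π).toSubmodule),
      Function.Injective f ∧ Function.Exact f g ∧ Function.Exact g h ∧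
        Function.Surjective h := by
  have hlie : ⁅(⊤ : LieIdeal K F), P ⊔ π.ker⁆ = ⁅(⊤ : LieIdeal K F), P⁆ ⊔ ⁅⊤, π.ker⁆ :=
    LieSubmodule.lie_sup _ _ _
  have hlie_le : ⁅(⊤ : LieIdeal K F), P ⊔ π.ker⁆ ≤ lowerCentralSeries K F F 1 ⊓ π.ker :=
    le_inf (LieSubmodule.top_lie_le_lowerCentralSeries_one _)
      (hlie ▸ sup_le hPR (LieSubmodule.lie_le_right _ _))
  have hmap : (lowerCentralSeries K F F 1 ⊓ (P ⊔ π.ker)).toSubmodule ≤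
      (P.map π).toSubmodule.comap π.toLinearMap :=
    fun x hx ↦ LieIdeal.map_sup_ker_eq_map (f := π) ▸ LieIdeal.mem_map hx.2
  have hker : ⁅(⊤ : LieIdeal K F), P ⊔ π.ker⁆.toSubmodule ≤ LinearMap.ker π.toLinearMap :=
    π.ker_toSubmodule ▸ (LieSubmodule.toSubmodule_le_toSubmodule _ _).mpr
      (hlie_le.trans inf_le_right)
  refine ⟨subquotientMap (le_inf (LieSubmodule.top_lie_le_lowerCentralSeries_one P) hPR)
      inf_le_left,
    subquotientMap (inf_le_inf_left _ le_sup_right) (LieSubmodule.mono_lie le_rfl le_sup_right),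
    subquotientLift _ π.toLinearMap hmap hker,
    subquotientMap_injective _ _ ?_, exact_subquotientMap _ _ fun x ↦ ?_,
    exact_subquotientMap _ _ fun x ↦ ?_, subquotientLift_surjective _ _ _ _ ?_⟩
  · exact fun x hx ↦ ⟨hx.2, hx.1⟩
  · rw [subquotientMap_mk_eq_zero_iff, ← LieSubmodule.sup_toSubmodule, ← hlie]
  · rw [subquotientLift_mk_eq_zero_iff, ← LieSubmodule.sup_toSubmodule,
      sup_eq_left.mpr hlie_le]
    exact ⟨fun hx ↦ ⟨x.2.1, hx⟩, fun hx ↦ hx.2⟩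
  · intro y hy
    obtain ⟨x, rfl⟩ := LieIdeal.mem_map_of_surjective hπ hy
    exact ⟨x, ⟨hP x.2, le_sup_left (a := P) x.2⟩, rfl⟩

theorem stmt8_general (K : Type) [Field K] (L : Type) [LieRing L] [LieAlgebra K L]
    (c : ℕ) (hc : 2 ≤ c)
    (hclass : lowerCentralSeries K L L c = ⊥)
    (X : Type) (π : FreeLieAlgebra K X →ₗ⁅K⁆ L) (hπ : Function.Surjective π) :
    lowerCentralSeries K (FreeLieAlgebra K X) (FreeLieAlgebra K X) c =
      ⁅(⊤ : LieIdeal K (FreeLieAlgebra K X)),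
        lowerCentralSeries K (FreeLieAlgebra K X) (FreeLieAlgebra K X) (c - 1)⁆ ∧
    lowerCentralSeries K (FreeLieAlgebra K X) (FreeLieAlgebra K X) c ≤ π.ker ∧
    ∃ (f : lieIdealQuot K (lowerCentralSeries K (FreeLieAlgebra K X) (FreeLieAlgebra K X) c)
            (⁅(⊤ : LieIdeal K (FreeLieAlgebra K X)), π.ker⁆ ⊓
              lowerCentralSeries K (FreeLieAlgebra K X) (FreeLieAlgebra K X) c) →ₗ[K]
          schurMult K π.ker)
      (g : schurMult K π.ker →ₗ[K]
        lieIdealQuot K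
          (lowerCentralSeries K (FreeLieAlgebra K X) (FreeLieAlgebra K X) 1 ⊓
            (lowerCentralSeries K (FreeLieAlgebra K X) (FreeLieAlgebra K X) (c - 1) ⊔ π.ker))
          ⁅(⊤ : LieIdeal K (FreeLieAlgebra K X)),
            lowerCentralSeries K (FreeLieAlgebra K X) (FreeLieAlgebra K X) (c - 1) ⊔ π.ker⁆)
      (h : lieIdealQuot K
          (lowerCentralSeries K (FreeLieAlgebra K X) (FreeLieAlgebra K X) 1 ⊓
            (lowerCentralSeries K (FreeLieAlgebra K X) (FreeLieAlgebra K X) (c - 1) ⊔ π.ker))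
          ⁅(⊤ : LieIdeal K (FreeLieAlgebra K X)),
            lowerCentralSeries K (FreeLieAlgebra K X) (FreeLieAlgebra K X) (c - 1) ⊔ π.ker⁆
          →ₗ[K] (lowerCentralSeries K L L (c - 1)).toSubmodule),
      Function.Injective f ∧ Function.Exact f g ∧ Function.Exact g h ∧
        Function.Surjective h := by
  have hsucc := lowerCentralSeries_succ K (FreeLieAlgebra K X) (FreeLieAlgebra K X) (c - 1)
  rw [Nat.sub_add_cancel (by omega : 1 ≤ c)] at hsucc
  have hker := π.lowerCentralSeries_le_ker hπ hclass
  refine ⟨hsucc, hker, ?_⟩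
  rw [hsucc, ← LieIdeal.lowerCentralSeries_map_eq (c - 1) hπ]
  exact exists_exact_schurMult_of_top_lie_le_ker hπ
    (antitone_lowerCentralSeries _ _ _ (by omega)) (hsucc ▸ hker)

theorem stmt8 (K : Type) [Field K] (L : Type) [LieRing L] [LieAlgebra K L]
    [FiniteDimensional K L] (c : ℕ) (hc : 2 ≤ c)
    (hclass : lowerCentralSeries K L L c = ⊥)
    (hclass' : lowerCentralSeries K L L (c - 1) ≠ ⊥)
    (X : Type) (π : FreeLieAlgebra K X →ₗ⁅K⁆ L) (hπ : Function.Surjective π) :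
    lowerCentralSeries K (FreeLieAlgebra K X) (FreeLieAlgebra K X) c =
      ⁅(⊤ : LieIdeal K (FreeLieAlgebra K X)),
        lowerCentralSeries K (FreeLieAlgebra K X) (FreeLieAlgebra K X) (c - 1)⁆ ∧
    lowerCentralSeries K (FreeLieAlgebra K X) (FreeLieAlgebra K X) c ≤ π.ker ∧
    ∃ (f : lieIdealQuot K (lowerCentralSeries K (FreeLieAlgebra K X) (FreeLieAlgebra K X) c)
            (⁅(⊤ : LieIdeal K (FreeLieAlgebra K X)), π.ker⁆ ⊓
              lowerCentralSeries K (FreeLieAlgebra K X) (FreeLieAlgebra K X) c) →ₗ[K]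
          schurMult K π.ker)
      (g : schurMult K π.ker →ₗ[K]
        lieIdealQuot K
          (lowerCentralSeries K (FreeLieAlgebra K X) (FreeLieAlgebra K X) 1 ⊓
            (lowerCentralSeries K (FreeLieAlgebra K X) (FreeLieAlgebra K X) (c - 1) ⊔ π.ker))
          ⁅(⊤ : LieIdeal K (FreeLieAlgebra K X)),
            lowerCentralSeries K (FreeLieAlgebra K X) (FreeLieAlgebra K X) (c - 1) ⊔ π.ker⁆)
      (h : lieIdealQuot K
          (lowerCentralSeries K (FreeLieAlgebra K X) (FreeLieAlgebra K X) 1 ⊓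
            (lowerCentralSeries K (FreeLieAlgebra K X) (FreeLieAlgebra K X) (c - 1) ⊔ π.ker))
          ⁅(⊤ : LieIdeal K (FreeLieAlgebra K X)),
            lowerCentralSeries K (FreeLieAlgebra K X) (FreeLieAlgebra K X) (c - 1) ⊔ π.ker⁆
          →ₗ[K] (lowerCentralSeries K L L (c - 1)).toSubmodule),
      Function.Injective f ∧ Function.Exact f g ∧ Function.Exact g h ∧
        Function.Surjective h :=
  stmt8_general K L c hc hclass X π hπ
end

section
/- Let F be a free Lie algebra over a field and R a nonzero ideal of F contained in F^2 with F/R nilpotent. Then [F,R] is a proper subideal of R. -/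
open LieModule Finset

/-!
Write `γ k` for `lowerCentralSeries k`, so `γ 0 = F` and `γ 1 = [F, F]`. If `[F, R] = R` then
`R = [F, R] ≤ [F, γ k] = γ (k + 1)` inductively, so `R` lies in every `γ k`; together with
`γ c ≤ R` this forces `γ c = γ (c + 1)`. On at most one generator `F` is abelian, so `R ≤ γ 1 = 0`.
On two generators `x ≠ y` the series is strictly decreasing: send `x` to `f ↦ f(0) X` and `y` to
`f ↦ X f` in `End R[X]`. Both raise the `X`-adic order by at least one, hence `γ k` is sent to
endomorphisms raising it by at least `k + 1`; but `(ad y)^k x ∈ γ k` goes to `f ↦ f(0) X^(k+1)`,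
which raises the order of `1` by exactly `k + 1`, so it is not in `γ (k + 1)`.
-/

attribute [local instance] LieRing.ofAssociativeRing

theorem LieSubmodule.le_lowerCentralSeries_of_top_lie_eq {R L M : Type*} [CommRing R]
    [LieRing L] [LieAlgebra R L] [AddCommGroup M] [Module R M] [LieRingModule L M]
    {N : LieSubmodule R L M} (h : ⁅(⊤ : LieIdeal R L), N⁆ = N) (k : ℕ) :
    N ≤ lowerCentralSeries R L M k := by
  induction k with
  | zero => exact le_top
  | succ k ih =>
    rw [lowerCentralSeries_succ, ← h]
    exact LieSubmodule.mono_lie_right ⊤ ih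

theorem LieHom.mem_of_mem_lowerCentralSeries {R L L' : Type*} [CommRing R] [LieRing L]
    [LieAlgebra R L] [LieRing L'] [LieAlgebra R L'] (f : L →ₗ⁅R⁆ L') {N : ℕ → Submodule R L'}
    (hN : ∀ k, ∀ x ∈ N 1, ∀ y ∈ N k, ⁅x, y⁆ ∈ N (k + 1)) (hf : ∀ z, f z ∈ N 1) :
    ∀ k, ∀ z ∈ lowerCentralSeries R L L k, f z ∈ N (k + 1) := by
  intro k
  induction k with
  | zero => exact fun z _ ↦ hf z
  | succ k ih =>
    intro z hz
    rw [lowerCentralSeries_succ, ← LieSubmodule.mem_toSubmodule,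
      LieSubmodule.lieIdeal_oper_eq_linear_span'] at hz
    suffices h : Submodule.span R _ ≤ (N (k + 1 + 1)).comap (f : L →ₗ[R] L') from h hz
    rw [Submodule.span_le]
    rintro _ ⟨x, -, y, hy, rfl⟩
    simpa using hN (k + 1) (f x) (hf x) (f y) (ih y hy)

namespace FreeLieAlgebra

variable (R : Type*) {ι L : Type*} [CommRing R] [LieRing L] [LieAlgebra R L]

theorem lift_apply_mem {S : LieSubalgebra R L} {f : ι → L} (hf : ∀ i, f i ∈ S)
    (z : FreeLieAlgebra R ι) : lift R f z ∈ S := by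
  have h : S.incl.comp (lift R fun i ↦ ⟨f i, hf i⟩) = lift R f := hom_ext fun i ↦ by simp
  rw [← h]
  exact (lift R (fun i ↦ (⟨f i, hf i⟩ : S)) z).2

theorem lieSpan_range_of : LieSubalgebra.lieSpan R (FreeLieAlgebra R ι) (Set.range (of R)) = ⊤ := by
  refine eq_top_iff.mpr fun z _ ↦ ?_
  rw [← LieHom.id_apply (R := R) z, ← lift_comp_of (LieHom.id : FreeLieAlgebra R ι →ₗ⁅R⁆ _)]
  exact lift_apply_mem R (fun i ↦ LieSubalgebra.subset_lieSpan (Set.mem_range_self i)) z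

theorem lift_iterate_toEnd_of (f : ι → L) (x y : ι) (k : ℕ) :
    lift R f ((toEnd R _ _ (of R y))^[k] (of R x)) = (toEnd R L L (f y))^[k] (f x) := by
  induction k with
  | zero => simp
  | succ k ih => simp only [Function.iterate_succ_apply', toEnd_apply_apply, LieHom.map_lie, ih,
      lift_of_apply]

instance isLieAbelian_of_subsingleton [Subsingleton ι] : IsLieAbelian (FreeLieAlgebra R ι) := by
  have h : IsLieAbelian (LieSubalgebra.lieSpan R _ (Set.range (of R (X := ι)))) :=
    LieSubalgebra.isLieAbelian_lieSpan_iff.mpr <| by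
      rintro _ ⟨i, rfl⟩ _ ⟨j, rfl⟩
      rw [Subsingleton.elim i j, lie_self]
  rw [lieSpan_range_of] at h
  exact (lie_abelian_iff_equiv_lie_abelian LieSubalgebra.topEquiv).mp h

end FreeLieAlgebra

namespace Polynomial

variable (R : Type*) [CommRing R]

def orderRaisingEnd (k : ℕ) : Submodule R (Module.End R R[X]) where
  carrier := {T | ∀ i (f : R[X]), X ^ i ∣ f → X ^ (i + k) ∣ T f}
  zero_mem' := by simp
  add_mem' hS hT i f hf := by simpa using dvd_add (hS i f hf) (hT i f hf)
  smul_mem' c T hT i f hf := by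
    rw [LinearMap.smul_apply, smul_eq_C_mul]
    exact dvd_mul_of_dvd_right (hT i f hf) _

variable {R}

theorem orderRaisingEnd_antitone : Antitone (orderRaisingEnd R) :=
  fun _ _ hab _ hT i f hf ↦ (pow_dvd_pow X (by omega)).trans (hT i f hf)

theorem mul_mem_orderRaisingEnd {S T : Module.End R R[X]} {a b : ℕ}
    (hS : S ∈ orderRaisingEnd R a) (hT : T ∈ orderRaisingEnd R b) :
    S * T ∈ orderRaisingEnd R (a + b) := fun i f hf ↦ by
  simpa only [Module.End.mul_apply, ← add_assoc, add_right_comm i b a] using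
    hS (i + b) _ (hT i f hf)

theorem lie_mem_orderRaisingEnd {S T : Module.End R R[X]} {a b : ℕ}
    (hS : S ∈ orderRaisingEnd R a) (hT : T ∈ orderRaisingEnd R b) :
    ⁅S, T⁆ ∈ orderRaisingEnd R (a + b) := by
  rw [Ring.lie_def]
  exact sub_mem (mul_mem_orderRaisingEnd hS hT) (add_comm b a ▸ mul_mem_orderRaisingEnd hT hS)

variable (R) in
def orderRaisingLieSubalgebra (k : ℕ) : LieSubalgebra R (Module.End R R[X]) :=
  { orderRaisingEnd R k with
    lie_mem' := fun hS hT ↦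
      orderRaisingEnd_antitone (by omega : k ≤ k + k) (lie_mem_orderRaisingEnd hS hT) }

theorem mulLeft_X_mem_orderRaisingEnd : LinearMap.mulLeft R (X : R[X]) ∈ orderRaisingEnd R 1 :=
  fun i f hf ↦ by simpa [pow_succ'] using mul_dvd_mul_left X hf

theorem monomial_comp_lcoeff_zero_mem_orderRaisingEnd (j : ℕ) :
    (monomial j).comp (lcoeff R 0) ∈ orderRaisingEnd R j := by
  rintro (_ | i) f hf
  · simp [← C_mul_X_pow_eq_monomial]
  · have hf0 : f.coeff 0 = 0 := X_dvd_iff.mp ((dvd_pow_self X i.succ_ne_zero).trans hf)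
    simp [hf0]

theorem lie_mulLeft_X_monomial_comp_lcoeff_zero (j : ℕ) :
    ⁅LinearMap.mulLeft R (X : R[X]), (monomial j).comp (lcoeff R 0)⁆ =
      (monomial (j + 1)).comp (lcoeff R 0) :=
  LinearMap.ext fun f ↦ by simp [Ring.lie_def, X_mul_monomial]

theorem iterate_toEnd_mulLeft_X_monomial_comp_lcoeff_zero (j k : ℕ) :
    (toEnd R _ _ (LinearMap.mulLeft R (X : R[X])))^[k] ((monomial j).comp (lcoeff R 0)) =
      (monomial (j + k)).comp (lcoeff R 0) := by
  induction k with
  | zero => rfl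
  | succ k ih =>
    rw [Function.iterate_succ_apply', ih, toEnd_apply_apply,
      lie_mulLeft_X_monomial_comp_lcoeff_zero, add_assoc]

end Polynomial

open Polynomial in
theorem FreeLieAlgebra.strictAnti_lowerCentralSeries (R ι : Type*) [CommRing R]
    [Nontrivial R] [Nontrivial ι] :
    StrictAnti (lowerCentralSeries R (FreeLieAlgebra R ι) (FreeLieAlgebra R ι)) := by
  classical
  refine strictAnti_nat_of_succ_lt fun k ↦
    (antitone_lowerCentralSeries R _ _ k.le_succ).lt_of_not_ge fun hle ↦ ?_
  obtain ⟨x, y, hxy⟩ := exists_pair_ne ι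
  let e : ι → Module.End R R[X] := fun i ↦
    if i = x then (monomial 1).comp (lcoeff R 0) else if i = y then LinearMap.mulLeft R X else 0
  have he : ∀ i, e i ∈ orderRaisingLieSubalgebra R 1 := by
    intro i
    by_cases hx : i = x
    · simp only [e, if_pos hx]
      exact monomial_comp_lcoeff_zero_mem_orderRaisingEnd 1
    by_cases hy : i = y
    · simp only [e, if_neg hx, if_pos hy]
      exact mulLeft_X_mem_orderRaisingEnd
    · simp only [e, if_neg hx, if_neg hy]
      exact zero_mem _
  have hv : lift R e ((toEnd R _ _ (of R y))^[k] (of R x)) =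
      (monomial (1 + k)).comp (lcoeff R 0) := by
    rw [lift_iterate_toEnd_of, ← iterate_toEnd_mulLeft_X_monomial_comp_lcoeff_zero]
    simp only [e, if_neg hxy.symm, if_true]
  have hmem := (lift R e).mem_of_mem_lowerCentralSeries (N := orderRaisingEnd R)
    (fun k _ hS _ hT ↦ add_comm 1 k ▸ lie_mem_orderRaisingEnd hS hT) (lift_apply_mem R he)
    (k + 1) _ (hle (iterate_toEnd_mem_lowerCentralSeries R _ _ (of R y) (of R x) k))
  rw [hv] at hmem
  have hdvd := hmem 0 1 (by simp)
  simp only [LinearMap.comp_apply, lcoeff_apply, coeff_one_zero, X_pow_dvd_iff] at hdvd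
  simpa using hdvd (1 + k) (by omega)

theorem stmt17_general (K : Type) [Field K] (n : ℕ)
    (R : LieIdeal K (FreeLieAlgebra K (Fin n))) (hR : R ≠ ⊥)
    (hnilp : ∃ c : ℕ,
      lowerCentralSeries K (FreeLieAlgebra K (Fin n)) (FreeLieAlgebra K (Fin n)) c ≤ R) :
    ⁅(⊤ : LieIdeal K (FreeLieAlgebra K (Fin n))), R⁆ < R := by
  refine (LieSubmodule.lie_le_right R ⊤).lt_of_ne fun hfix ↦ ?_
  have hR_le := LieSubmodule.le_lowerCentralSeries_of_top_lie_eq hfix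
  rcases subsingleton_or_nontrivial (Fin n) with _ | _
  · have hlcs := (trivial_iff_lower_central_eq_bot K (FreeLieAlgebra K (Fin n))
      (FreeLieAlgebra K (Fin n))).mp inferInstance
    exact hR (le_bot_iff.mp (hlcs ▸ hR_le 1))
  · obtain ⟨c, hc⟩ := hnilp
    exact (FreeLieAlgebra.strictAnti_lowerCentralSeries K (Fin n) c.lt_succ_self).not_ge
      (hc.trans (hR_le (c + 1)))

theorem stmt17 (K : Type) [Field K] (n : ℕ)
    (R : LieIdeal K (FreeLieAlgebra K (Fin n))) (hR : R ≠ ⊥)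
    (hR2 : R ≤ lowerCentralSeries K (FreeLieAlgebra K (Fin n)) (FreeLieAlgebra K (Fin n)) 1)
    (hnilp : ∃ c : ℕ,
      lowerCentralSeries K (FreeLieAlgebra K (Fin n)) (FreeLieAlgebra K (Fin n)) c ≤ R) :
    ⁅(⊤ : LieIdeal K (FreeLieAlgebra K (Fin n))), R⁆ < R :=
  stmt17_general K n R hR hnilp
end
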